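/- If m is prime and c ∈ {0,1}^m is a vector with k ones where 1 ≤ k ≤ m-1, then the m cyclic shifts of c span a subspace of ℚ^m of dimension m. -/

import Mathlib

/-!
Identify `ℚ^(ℤ/m)` with `ℚ[X]/(X^m - 1)` by `v ↦ ∑ vᵢ Xⁱ`. A cyclic shift of `v` multiplies its
image by a power of `X`, and these powers form a basis, so the shifts of `c` span everything as
soon as `c(X) = ∑ cᵢ Xⁱ` is a unit modulo `X^m - 1 = (X - 1) Φ_m`. It is coprime to `X - 1`
because `c(1) = k ≠ 0`, and to the irreducible `Φ_m = 1 + X + ⋯ + X^(m-1)` because a multiple of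
`Φ_m` of degree `< m` has all its coefficients equal, while `c` takes both values `0` and `1`.
-/

open Polynomial

theorem AdjoinRoot.isUnit_mk_of_isCoprime {R : Type*} [CommRing R] {f q : R[X]}
    (h : IsCoprime q f) : IsUnit (AdjoinRoot.mk f q) :=
  isCoprime_zero_right.mp (by simpa [AdjoinRoot.mk_self] using h.map (AdjoinRoot.mk f))

section Semiring

variable {K : Type*} [Semiring K] {n : ℕ} [NeZero n]

noncomputable def cyclicPoly (v : ZMod n → K) : K[X] :=
  ∑ i, C (v i) * X ^ i.val

theorem coeff_cyclicPoly_val (v : ZMod n → K) (i : ZMod n) :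
    (cyclicPoly v).coeff i.val = v i := by
  rw [cyclicPoly, finsetSum_coeff, Finset.sum_eq_single i]
  · simp
  · intro j _ hji
    simp [coeff_X_pow, (ZMod.val_injective n).ne hji.symm]
  · simp

theorem natDegree_cyclicPoly_le (v : ZMod n → K) : (cyclicPoly v).natDegree ≤ n - 1 :=
  natDegree_sum_le_of_forall_le _ _ fun i _ =>
    (natDegree_C_mul_X_pow_le _ _).trans (Nat.le_sub_one_of_lt (ZMod.val_lt i))

theorem eval_one_cyclicPoly (v : ZMod n → K) : (cyclicPoly v).eval 1 = ∑ i, v i := by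
  simp [cyclicPoly, eval_finsetSum]

end Semiring

section CommRing

variable (K : Type*) [CommRing K] (n : ℕ) [NeZero n]

local notation "ρ" => AdjoinRoot.root (X ^ n - 1 : K[X])

theorem Polynomial.monic_X_pow_sub_one : (X ^ n - 1 : K[X]).Monic := by
  simpa using monic_X_pow_sub_C (1 : K) (NeZero.ne n)

theorem AdjoinRoot.root_X_pow_sub_one_pow_val_add (a b : ZMod n) :
    ρ ^ (a + b).val = ρ ^ a.val * ρ ^ b.val := by
  have hroot : ρ ^ n = 1 := by
    have := AdjoinRoot.mk_self (f := (X ^ n - 1 : K[X]))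
    rwa [map_sub, map_pow, AdjoinRoot.mk_X, map_one, sub_eq_zero] at this
  rw [← pow_add, ZMod.val_add, ← pow_eq_pow_mod _ hroot]

variable [Nontrivial K]

noncomputable def cyclicBasis : Module.Basis (ZMod n) K (AdjoinRoot (X ^ n - 1 : K[X])) :=
  (AdjoinRoot.powerBasis' (monic_X_pow_sub_one K n)).basis.reindex
    ((finCongr (by simpa using natDegree_X_pow_sub_C (n := n) (r := (1 : K)))).trans
      (ZMod.finEquiv n).toEquiv)

theorem cyclicBasis_apply (i : ZMod n) : cyclicBasis K n i = ρ ^ i.val := by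
  -- `ZMod.finEquiv n` only unfolds to the identity once `n` is a successor
  obtain ⟨n, rfl⟩ : ∃ m, n = m + 1 := Nat.exists_eq_succ_of_ne_zero (NeZero.ne n)
  rw [cyclicBasis, Module.Basis.reindex_apply, PowerBasis.coe_basis]
  rfl

variable {K n}

theorem cyclicBasis_equivFun_symm_shift (v : ZMod n → K) (t : ZMod n) :
    (cyclicBasis K n).equivFun.symm (fun i => v (i + t)) =
      ρ ^ (-t).val * (cyclicBasis K n).equivFun.symm v := by
  simp only [Module.Basis.equivFun_symm_apply, cyclicBasis_apply, Finset.mul_sum, mul_smul_comm,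
    ← AdjoinRoot.root_X_pow_sub_one_pow_val_add]
  exact Fintype.sum_equiv (Equiv.addRight t) _ _ fun i => by simp

theorem span_range_shift_eq_top_of_isUnit (v : ZMod n → K)
    (hv : IsUnit ((cyclicBasis K n).equivFun.symm v)) :
    Submodule.span K (Set.range fun t i => v (i + t)) = ⊤ := by
  let b := ((cyclicBasis K n).map (hv.unit.mulLeftLinearEquiv K _)).map
    (cyclicBasis K n).equivFun
  have hb : (fun t i => v (i + t)) = b ∘ Equiv.neg (ZMod n) := by
    ext1 t
    apply (cyclicBasis K n).equivFun.symm.injective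
    rw [cyclicBasis_equivFun_symm_shift]
    simp only [b, Function.comp_apply, Module.Basis.map_apply, LinearEquiv.symm_apply_apply,
      Units.mulLeftLinearEquiv_apply, IsUnit.unit_spec, cyclicBasis_apply, Equiv.neg_apply,
      mul_comm]
  rw [hb, (Equiv.neg _).surjective.range_comp, b.span_eq]

theorem mk_cyclicPoly (v : ZMod n → K) :
    AdjoinRoot.mk (X ^ n - 1) (cyclicPoly v) = (cyclicBasis K n).equivFun.symm v := by
  simp [cyclicPoly, Module.Basis.equivFun_symm_apply, cyclicBasis_apply, Algebra.smul_def]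

end CommRing

theorem isCoprime_cyclicPoly_X_pow_sub_one {p : ℕ} [Fact p.Prime] (v : ZMod p → ℚ)
    (hsum : ∑ i, v i ≠ 0) (hv : ∃ i j, v i ≠ v j) :
    IsCoprime (cyclicPoly v) (X ^ p - 1) := by
  rw [← cyclotomic_prime_mul_X_sub_one]
  refine IsCoprime.mul_right ?_ ?_
  · refine ((cyclotomic.irreducible_rat (Fact.out : p.Prime).pos).coprime_iff_not_dvd.2 ?_).symm
    intro hdvd
    have hdeg : (cyclotomic p ℚ).natDegree = p - 1 := by
      rw [natDegree_cyclotomic, Nat.totient_prime Fact.out]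
    have hmul := eq_leadingCoeff_mul_of_monic_of_dvd_of_natDegree_le (cyclotomic.monic p ℚ) hdvd
      (hdeg ▸ natDegree_cyclicPoly_le v)
    have hconst (i : ZMod p) : v i = (cyclicPoly v).leadingCoeff := by
      have hcycl : (cyclotomic p ℚ).coeff i.val = 1 := by
        simp [cyclotomic_prime, finsetSum_coeff, coeff_X_pow, ZMod.val_lt]
      simpa [coeff_cyclicPoly_val, hcycl] using congrArg (coeff · i.val) hmul
    obtain ⟨i, j, hij⟩ := hv
    exact hij ((hconst i).trans (hconst j).symm)
  · refine ((irreducible_X_sub_C (1 : ℚ)).coprime_iff_not_dvd.2 ?_).symm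
    rwa [dvd_iff_isRoot, IsRoot, eval_one_cyclicPoly]

/-- If `m` is prime and `c ∈ {0,1}^m` has `k` ones with `1 ≤ k ≤ m-1`, then the `m` cyclic
shifts of `c` span a subspace of `ℚ^m` of dimension `m`. -/
theorem shifts_full_rank_of_prime (m k : ℕ) (hm : m.Prime) [NeZero m]
    (c : ZMod m → ℚ) (h01 : ∀ i, c i = 0 ∨ c i = 1)
    (hk : (Finset.univ.filter (fun i => c i = 1)).card = k)
    (hk1 : 1 ≤ k) (hkm : k ≤ m - 1) :
    Module.finrank ℚ (Submodule.span ℚ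
      (Set.range (fun t : ZMod m => fun i : ZMod m => c (i + t)))) = m := by
  have : Fact m.Prime := ⟨hm⟩
  have hsum : ∑ i, c i = k := by
    rw [← hk, ← Finset.sum_boole]
    exact Finset.sum_congr rfl fun i _ => by rcases h01 i with h | h <;> simp [h]
  obtain ⟨i, hi⟩ : ∃ i, c i = 1 := by
    obtain ⟨i, hi⟩ := Finset.card_pos.1 (hk ▸ hk1 : 0 < _)
    exact ⟨i, (Finset.mem_filter.1 hi).2⟩
  obtain ⟨j, hj⟩ : ∃ j, c j ≠ 1 := by
    by_contra! hall
    rw [Finset.filter_true_of_mem fun i _ => hall i, Finset.card_univ, ZMod.card] at hk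
    omega
  have hcop := isCoprime_cyclicPoly_X_pow_sub_one c
    (by rw [hsum]; exact Nat.cast_ne_zero.2 (by omega)) ⟨i, j, hi ▸ hj.symm⟩
  have hunit := AdjoinRoot.isUnit_mk_of_isCoprime hcop
  rw [mk_cyclicPoly] at hunit
  rw [span_range_shift_eq_top_of_isUnit c hunit, finrank_top, Module.finrank_fintype_fun_eq_card,
    ZMod.card]
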